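/- Let D ⊆ ℝⁿ be an open set, let g₀, …, g_m : D → ℝⁿ, let Ψ : D → ℝ^{ñ} be differentiable, and let g̃₀, …, g̃_m : ℝ^{ñ} → ℝ^{ñ} satisfy g̃ⱼ(Ψ(x)) = DΨ(x) gⱼ(x) for all x ∈ D and all j. Let u : ℝ → ℝᵐ and let x : [t₀, t₁] → D be differentiable with x'(t) = g₀(x(t)) + Σᵢ gᵢ(x(t)) uᵢ(t). Suppose K ≥ 0 is such that for each t ∈ [t₀, t₁] the map z ↦ g̃₀(z) + Σᵢ g̃ᵢ(z) uᵢ(t) is K-Lipschitz on ℝ^{ñ}. If z : [t₀, t₁] → ℝ^{ñ} is differentiable with z'(t) = g̃₀(z(t)) + Σᵢ g̃ᵢ(z(t)) uᵢ(t) and z(t₀) = Ψ(x(t₀)), then z(t) = Ψ(x(t)) for all t ∈ [t₀, t₁]; in particular z(t) ∈ Ψ(D) for all t, i.e., the image Ψ(D) is invariant under the lifted dynamics for consistently initialized initial conditions. -/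

import Mathlib

/-- invariance of the image of an invariant immersion under the lifted
dynamics: if the lifted vector field is `K`-Lipschitz (uniformly in `t ∈ [t₀,t₁]`),
any solution `z` of the lifted dynamics that is consistently initialized,
`z t₀ = Ψ (x t₀)`, coincides with `Ψ ∘ x` on `[t₀,t₁]`; in particular it stays in
`Ψ '' D`. -/
theorem stmt_2 {n ntilde m : ℕ} (D : Set (Fin n → ℝ)) (hD : IsOpen D)
    (g₀ : (Fin n → ℝ) → (Fin n → ℝ)) (g : Fin m → (Fin n → ℝ) → (Fin n → ℝ))
    (Ψ : (Fin n → ℝ) → (Fin ntilde → ℝ))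
    (hΨ : ∀ x ∈ D, DifferentiableAt ℝ Ψ x)
    (gl₀ : (Fin ntilde → ℝ) → (Fin ntilde → ℝ))
    (gl : Fin m → (Fin ntilde → ℝ) → (Fin ntilde → ℝ))
    (hinv₀ : ∀ x ∈ D, gl₀ (Ψ x) = fderiv ℝ Ψ x (g₀ x))
    (hinv : ∀ (i : Fin m), ∀ x ∈ D, gl i (Ψ x) = fderiv ℝ Ψ x (g i x))
    (u : ℝ → Fin m → ℝ) (t₀ t₁ : ℝ)
    (x : ℝ → Fin n → ℝ) (hxD : ∀ t ∈ Set.Icc t₀ t₁, x t ∈ D)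
    (hx : ∀ t ∈ Set.Icc t₀ t₁, HasDerivAt x (g₀ (x t) + ∑ i, u t i • g i (x t)) t)
    (K : NNReal)
    (hLip : ∀ t ∈ Set.Icc t₀ t₁,
      LipschitzWith K (fun z : Fin ntilde → ℝ => gl₀ z + ∑ i, u t i • gl i z))
    (z : ℝ → Fin ntilde → ℝ)
    (hz : ∀ t ∈ Set.Icc t₀ t₁, HasDerivAt z (gl₀ (z t) + ∑ i, u t i • gl i (z t)) t)
    (hz₀ : z t₀ = Ψ (x t₀)) :
    ∀ t ∈ Set.Icc t₀ t₁, z t = Ψ (x t) ∧ z t ∈ Ψ '' D := by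
  -- extend the vector field by 0 outside the time interval to get global Lipschitz
  set v : ℝ → (Fin ntilde → ℝ) → (Fin ntilde → ℝ) := fun t w =>
    if t ∈ Set.Icc t₀ t₁ then gl₀ w + ∑ i, u t i • gl i w else 0 with hv_def
  have hvLip : ∀ t, LipschitzWith K (v t) := by
    intro t
    by_cases ht : t ∈ Set.Icc t₀ t₁
    · simpa only [hv_def, if_pos ht] using hLip t ht
    · simpa only [hv_def, if_neg ht] using (LipschitzWith.const (0 : Fin ntilde → ℝ)).weaken (zero_le : (0 : NNReal) ≤ K)
  have hveq : ∀ t ∈ Set.Icc t₀ t₁, ∀ w,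
      v t w = gl₀ w + ∑ i, u t i • gl i w := by
    intro t ht w; simp only [hv_def, if_pos ht]
  -- Ψ ∘ x solves the lifted ODE
  have hΨx : ∀ t ∈ Set.Icc t₀ t₁,
      HasDerivAt (fun s => Ψ (x s)) (v t (Ψ (x t))) t := by
    intro t ht
    have hd := hΨ (x t) (hxD t ht)
    have hc := hd.hasFDerivAt.comp_hasDerivAt t (hx t ht)
    have : fderiv ℝ Ψ (x t) (g₀ (x t) + ∑ i, u t i • g i (x t))
        = v t (Ψ (x t)) := by
      rw [hveq t ht, map_add, map_sum, hinv₀ (x t) (hxD t ht)]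
      congr 1
      refine Finset.sum_congr rfl fun i _ => ?_
      rw [map_smul, hinv i (x t) (hxD t ht)]
    exact this ▸ hc
  have hzv : ∀ t ∈ Set.Icc t₀ t₁, HasDerivAt z (v t (z t)) t := by
    intro t ht
    rw [hveq t ht]
    exact hz t ht
  have key : Set.EqOn z (fun s => Ψ (x s)) (Set.Icc t₀ t₁) := by
    refine ODE_solution_unique hvLip ?_ ?_ ?_ ?_ hz₀
    · exact fun t ht => (hzv t ht).continuousAt.continuousWithinAt
    · exact fun t ht => (hzv t (Set.Ico_subset_Icc_self ht)).hasDerivWithinAt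
    · exact fun t ht => (hΨx t ht).continuousAt.continuousWithinAt
    · exact fun t ht => (hΨx t (Set.Ico_subset_Icc_self ht)).hasDerivWithinAt
  intro t ht
  exact ⟨key ht, key ht ▸ Set.mem_image_of_mem Ψ (hxD t ht)⟩
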